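/- arXiv:1806.05883 — 6 statements merged into one kernel-verified Lean document; each statement's English description precedes it below -/
import Mathlib

section
/- If a_1 ≤ ... ≤ a_n and b_1 ≤ ... ≤ b_n are real sequences and ω_1,...,ω_n, ν_1,...,ν_n are nonnegative reals, then (∑_i ω_i)(∑_j ν_j a_j b_j) + (∑_i ν_i)(∑_j ω_j a_j b_j) ≥ (∑_i ν_i a_i)(∑_j ω_j b_j) + (∑_i ω_i a_i)(∑_j ν_j b_j). -/
theorem behzad_chebyshev_sum_inequality (n : ℕ) (a b ω ν : Fin n → ℝ)
    (ha : Monotone a) (hb : Monotone b) (hω : ∀ i, 0 ≤ ω i) (hν : ∀ i, 0 ≤ ν i) :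
    (∑ i, ω i) * (∑ j, ν j * a j * b j) + (∑ i, ν i) * (∑ j, ω j * a j * b j) ≥
      (∑ i, ν i * a i) * (∑ j, ω j * b j) + (∑ i, ω i * a i) * (∑ j, ν j * b j) := by
  rw [ge_iff_le, ← sub_nonneg]
  have e1 : (∑ i, ν i) * (∑ j, ω j * a j * b j)
      = ∑ i, ∑ j, ω i * ν j * (a i * b i) := by
    rw [Finset.sum_mul_sum, Finset.sum_comm]
    exact Finset.sum_congr rfl fun i _ => Finset.sum_congr rfl fun j _ => by ring
  have e2 : (∑ i, ν i * a i) * (∑ j, ω j * b j)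
      = ∑ i, ∑ j, ω i * ν j * (a j * b i) := by
    rw [Finset.sum_mul_sum, Finset.sum_comm]
    exact Finset.sum_congr rfl fun i _ => Finset.sum_congr rfl fun j _ => by ring
  have e3 : (∑ i, ω i) * (∑ j, ν j * a j * b j)
      = ∑ i, ∑ j, ω i * ν j * (a j * b j) := by
    rw [Finset.sum_mul_sum]
    exact Finset.sum_congr rfl fun i _ => Finset.sum_congr rfl fun j _ => by ring
  have e4 : (∑ i, ω i * a i) * (∑ j, ν j * b j)
      = ∑ i, ∑ j, ω i * ν j * (a i * b j) := by
    rw [Finset.sum_mul_sum]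
    exact Finset.sum_congr rfl fun i _ => Finset.sum_congr rfl fun j _ => by ring
  rw [e1, e2, e3, e4]
  have : (∑ i, ∑ j, ω i * ν j * (a j * b j)) + (∑ i, ∑ j, ω i * ν j * (a i * b i))
      - ((∑ i, ∑ j, ω i * ν j * (a j * b i)) + (∑ i, ∑ j, ω i * ν j * (a i * b j)))
      = ∑ i, ∑ j, ω i * ν j * ((a j - a i) * (b j - b i)) := by
    rw [← Finset.sum_add_distrib, ← Finset.sum_add_distrib, ← Finset.sum_sub_distrib]
    refine Finset.sum_congr rfl fun i _ => ?_
    rw [← Finset.sum_add_distrib, ← Finset.sum_add_distrib, ← Finset.sum_sub_distrib]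
    exact Finset.sum_congr rfl fun j _ => by ring
  rw [this]
  refine Finset.sum_nonneg fun i _ => Finset.sum_nonneg fun j _ => ?_
  have hab : 0 ≤ (a j - a i) * (b j - b i) := by
    rcases le_total i j with h | h
    · exact mul_nonneg (sub_nonneg.2 (ha h)) (sub_nonneg.2 (hb h))
    · exact mul_nonneg_of_nonpos_of_nonpos (sub_nonpos.2 (ha h)) (sub_nonpos.2 (hb h))
  exact mul_nonneg (mul_nonneg (hω i) (hν j)) hab
end

section
/- Let A_1,...,A_n and B_1,...,B_n be n×n complex Hermitian matrices satisfying the synchronous Hadamard property, i.e., (A_j - A_i) ∘ (B_j - B_i) is positive semidefinite for all i, j, where ∘ denotes the entrywise (Hadamard) product. Let ω_1,...,ω_n and ν_1,...,ν_n be nonnegative reals. Then (∑_i ω_i)(∑_j ν_j (A_j ∘ B_j)) + (∑_i ν_i)(∑_j ω_j (A_j ∘ B_j)) ≥ (∑_i ω_i A_i) ∘ (∑_j ν_j B_j) + (∑_i ν_i A_i) ∘ (∑_j ω_j B_j) in the Loewner (positive semidefinite) order. -/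
/-! For any bilinear map `f`, Korkine's identity writes the two-weight Chebyshev defect as
`∑ i, ∑ j, (w i * v j) • f (a j - a i) (b j - b i)`. Applied to the Hadamard product, every
summand is a nonnegative multiple of a positive semidefinite matrix by the synchronous property. -/

open Matrix ComplexOrder

namespace LinearMap

variable {ι R M N P : Type*} [CommRing R] [AddCommGroup M] [AddCommGroup N] [AddCommGroup P]
  [Module R M] [Module R N] [Module R P]

theorem two_weight_chebyshev_defect_eq (f : M →ₗ[R] N →ₗ[R] P) (s : Finset ι)
    (w v : ι → R) (a : ι → M) (b : ι → N) :
    (∑ i ∈ s, w i) • ∑ j ∈ s, v j • f (a j) (b j) +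
        (∑ i ∈ s, v i) • ∑ j ∈ s, w j • f (a j) (b j) -
      (f (∑ i ∈ s, w i • a i) (∑ j ∈ s, v j • b j) +
        f (∑ i ∈ s, v i • a i) (∑ j ∈ s, w j • b j)) =
    ∑ i ∈ s, ∑ j ∈ s, (w i * v j) • f (a j - a i) (b j - b i) := by
  have double_sum (x y : ι → R) (c : ι → P) :
      (∑ i ∈ s, x i) • ∑ j ∈ s, y j • c j = ∑ i ∈ s, ∑ j ∈ s, (x i * y j) • c j := by
    rw [Finset.sum_smul]
    simp only [Finset.smul_sum, smul_smul]
  have apply_sums (x y : ι → R) :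
      f (∑ i ∈ s, x i • a i) (∑ j ∈ s, y j • b j) =
        ∑ i ∈ s, ∑ j ∈ s, (x i * y j) • f (a i) (b j) := by
    simp only [map_sum, LinearMap.sum_apply, map_smul, LinearMap.smul_apply, smul_smul,
      Finset.smul_sum]
    rw [Finset.sum_comm]
    simp only [mul_comm (y _)]
  rw [double_sum, double_sum, apply_sums, apply_sums,
    Finset.sum_comm (f := fun i j => (v i * w j) • f (a j) (b j)),
    Finset.sum_comm (f := fun i j => (v i * w j) • f (a i) (b j))]
  simp only [← Finset.sum_add_distrib, ← Finset.sum_sub_distrib]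
  refine Finset.sum_congr rfl fun i _ => Finset.sum_congr rfl fun j _ => ?_
  simp only [map_sub, LinearMap.sub_apply]
  module

end LinearMap

namespace Matrix

variable {m n R α : Type*} [CommSemiring R] [NonUnitalNonAssocSemiring α] [Module R α]
  [IsScalarTower R α α] [SMulCommClass R α α]

variable (R) in
def hadamardBilin :
    Matrix m n α →ₗ[R] Matrix m n α →ₗ[R] Matrix m n α :=
  LinearMap.mk₂ R hadamard (fun _ _ _ => add_hadamard _ _ _) (fun _ _ _ => smul_hadamard _ _ _)
    (fun _ _ _ => hadamard_add _ _ _) (fun _ _ _ => hadamard_smul _ _ _)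

@[simp]
theorem hadamardBilin_apply (A B : Matrix m n α) :
    hadamardBilin R A B = A ⊙ B :=
  rfl

end Matrix

theorem chebyshev_hadamard_two_weight_general (n : ℕ)
    (A B : Fin n → Matrix (Fin n) (Fin n) ℂ)
    (hsync : ∀ i j, ((A j - A i).hadamard (B j - B i)).PosSemidef)
    (ω ν : Fin n → ℝ) (hω : ∀ i, 0 ≤ ω i) (hν : ∀ i, 0 ≤ ν i) :
    (((∑ i, ω i) • ∑ j, ν j • (A j).hadamard (B j) +
        (∑ i, ν i) • ∑ j, ω j • (A j).hadamard (B j)) -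
      ((∑ i, ω i • A i).hadamard (∑ j, ν j • B j) +
        (∑ i, ν i • A i).hadamard (∑ j, ω j • B j))).PosSemidef := by
  have defect := (hadamardBilin ℝ).two_weight_chebyshev_defect_eq Finset.univ ω ν A B
  simp only [hadamardBilin_apply] at defect
  rw [defect]
  exact posSemidef_sum _ fun i _ => posSemidef_sum _ fun j _ =>
    (hsync i j).smul (mul_nonneg (hω i) (hν j))

theorem chebyshev_hadamard_two_weight (n : ℕ)
    (A B : Fin n → Matrix (Fin n) (Fin n) ℂ)
    (hA : ∀ i, (A i).IsHermitian) (hB : ∀ i, (B i).IsHermitian)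
    (hsync : ∀ i j, ((A j - A i).hadamard (B j - B i)).PosSemidef)
    (ω ν : Fin n → ℝ) (hω : ∀ i, 0 ≤ ω i) (hν : ∀ i, 0 ≤ ν i) :
    (((∑ i, ω i) • ∑ j, ν j • (A j).hadamard (B j) +
        (∑ i, ν i) • ∑ j, ω j • (A j).hadamard (B j)) -
      ((∑ i, ω i • A i).hadamard (∑ j, ν j • B j) +
        (∑ i, ν i • A i).hadamard (∑ j, ω j • B j))).PosSemidef :=
  chebyshev_hadamard_two_weight_general n A B hsync ω ν hω hν
end

section
/- Let A_1,...,A_n and B_1,...,B_n be n×n complex Hermitian matrices with the synchronous Hadamard property, and ω_1,...,ω_n nonnegative reals. Then (∑_i ω_i)(∑_j ω_j (A_j ∘ B_j)) ≥ (∑_i ω_i A_i) ∘ (∑_j ω_j B_j) in the Loewner order. -/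
open Matrix ComplexOrder

/-! Chebyshev's sum identity
`2 ((∑ wᵢ) ∑ wⱼ aⱼ bⱼ - (∑ wᵢ aᵢ)(∑ wⱼ bⱼ)) = ∑ᵢ ∑ⱼ wᵢ wⱼ (aⱼ - aᵢ)(bⱼ - bᵢ)`
holds entrywise for matrices, with the Hadamard product in place of multiplication. Under the
synchronous Hadamard property every term on the right is positive semidefinite, and so is their
nonnegative combination. -/

theorem Finset.chebyshev_sum_identity {R ι : Type*} [CommRing R] (s : Finset ι)
    (w a b : ι → R) :
    2 * ((∑ i ∈ s, w i) * ∑ j ∈ s, w j * (a j * b j)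
      - (∑ i ∈ s, w i * a i) * ∑ j ∈ s, w j * b j)
      = ∑ i ∈ s, ∑ j ∈ s, w i * w j * ((a j - a i) * (b j - b i)) := by
  have expand : ∀ i j, w i * w j * ((a j - a i) * (b j - b i))
      = w i * (w j * (a j * b j)) + w j * (w i * (a i * b i))
        - w i * a i * (w j * b j) - w j * a j * (w i * b i) := fun i j => by ring
  simp only [expand, Finset.sum_sub_distrib, Finset.sum_add_distrib]
  rw [Finset.sum_comm (f := fun i j => w j * (w i * (a i * b i))),
    Finset.sum_comm (f := fun i j => w j * a j * (w i * b i)),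
    ← Finset.sum_mul_sum, ← Finset.sum_mul_sum]
  ring

theorem Matrix.chebyshev_hadamard_identity {S R ι m : Type*} [CommSemiring S] [CommRing R]
    [Algebra S R] (s : Finset ι) (w : ι → S) (A B : ι → Matrix m m R) :
    (2 : S) • ((∑ i ∈ s, w i) • ∑ j ∈ s, w j • A j ⊙ B j
      - (∑ i ∈ s, w i • A i) ⊙ ∑ j ∈ s, w j • B j)
      = ∑ i ∈ s, ∑ j ∈ s, (w i * w j) • ((A j - A i) ⊙ (B j - B i)) := by
  ext k l
  simp only [sub_apply, smul_apply, sum_apply, hadamard_apply, Algebra.smul_def, map_mul,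
    map_sum, map_ofNat]
  exact Finset.chebyshev_sum_identity s (algebraMap S R ∘ w) (A · k l) (B · k l)

theorem Matrix.PosSemidef.chebyshev_hadamard {𝕜 ι m : Type*} [RCLike 𝕜] [Fintype m]
    (s : Finset ι) (w : ι → ℝ) (hw : ∀ i ∈ s, 0 ≤ w i) (A B : ι → Matrix m m 𝕜)
    (hsync : ∀ i ∈ s, ∀ j ∈ s, ((A j - A i) ⊙ (B j - B i)).PosSemidef) :
    ((∑ i ∈ s, w i) • ∑ j ∈ s, w j • A j ⊙ B j
      - (∑ i ∈ s, w i • A i) ⊙ ∑ j ∈ s, w j • B j).PosSemidef := by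
  have h2 : ((2 : ℝ) • ((∑ i ∈ s, w i) • ∑ j ∈ s, w j • A j ⊙ B j
      - (∑ i ∈ s, w i • A i) ⊙ ∑ j ∈ s, w j • B j)).PosSemidef := by
    rw [chebyshev_hadamard_identity]
    exact posSemidef_sum s fun i hi => posSemidef_sum s fun j hj =>
      (hsync i hi j hj).smul (mul_nonneg (hw i hi) (hw j hj))
  simpa using h2.smul (inv_nonneg.mpr zero_le_two : (0 : ℝ) ≤ 2⁻¹)

theorem chebyshev_hadamard_one_weight_general (n : ℕ)
    (A B : Fin n → Matrix (Fin n) (Fin n) ℂ)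
    (hsync : ∀ i j, ((A j - A i).hadamard (B j - B i)).PosSemidef)
    (ω : Fin n → ℝ) (hω : ∀ i, 0 ≤ ω i) :
    (((∑ i, ω i) • ∑ j, ω j • (A j).hadamard (B j)) -
      (∑ i, ω i • A i).hadamard (∑ j, ω j • B j)).PosSemidef :=
  PosSemidef.chebyshev_hadamard Finset.univ ω (fun i _ => hω i) A B fun i _ j _ => hsync i j

theorem chebyshev_hadamard_one_weight (n : ℕ)
    (A B : Fin n → Matrix (Fin n) (Fin n) ℂ)
    (hA : ∀ i, (A i).IsHermitian) (hB : ∀ i, (B i).IsHermitian)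
    (hsync : ∀ i j, ((A j - A i).hadamard (B j - B i)).PosSemidef)
    (ω : Fin n → ℝ) (hω : ∀ i, 0 ≤ ω i) :
    (((∑ i, ω i) • ∑ j, ω j • (A j).hadamard (B j)) -
      (∑ i, ω i • A i).hadamard (∑ j, ω j • B j)).PosSemidef :=
  chebyshev_hadamard_one_weight_general n A B hsync ω hω
end

section
/- For positive definite n×n matrices A and B and α ∈ [0,1], the Hadamard product satisfies A ∘ B ≥ (A #_α B) ∘ (A #_{1-α} B) in the Loewner order, where A #_α B = A^{1/2}(A^{-1/2} B A^{-1/2})^α A^{1/2} is the weighted geometric mean. -/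
open Matrix ComplexOrder

/-- `f(A)` via the spectral theorem: apply `f : ℝ → ℝ` to the eigenvalues of a
Hermitian matrix (and act as the identity on non-Hermitian input). -/
noncomputable def matFun {m : Type*} [Fintype m] [DecidableEq m]
    (f : ℝ → ℝ) (A : Matrix m m ℂ) : Matrix m m ℂ :=
  if hA : A.IsHermitian then
    (hA.eigenvectorUnitary : Matrix m m ℂ) *
      Matrix.diagonal (fun i => ((f (hA.eigenvalues i) : ℝ) : ℂ)) *
      star (hA.eigenvectorUnitary : Matrix m m ℂ)
  else A

/-- Real power `A ^ r` of a (Hermitian) matrix, via the spectral theorem. -/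
noncomputable def mpow {m : Type*} [Fintype m] [DecidableEq m]
    (A : Matrix m m ℂ) (r : ℝ) : Matrix m m ℂ :=
  matFun (fun x => x ^ r) A

/-- The power mean interpolational path `A m_{r,t} B`; for `r = 0` it is the
weighted geometric mean `A^{1/2} (A^{-1/2} B A^{-1/2})^t A^{1/2}`. -/
noncomputable def powerMean {m : Type*} [Fintype m] [DecidableEq m]
    (r t : ℝ) (A B : Matrix m m ℂ) : Matrix m m ℂ :=
  mpow A (1 / 2) *
    (if r = 0 then mpow (mpow A (-(1 / 2)) * B * mpow A (-(1 / 2))) t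
      else mpow ((1 - t) • (1 : Matrix m m ℂ) +
        t • mpow (mpow A (-(1 / 2)) * B * mpow A (-(1 / 2))) r) (1 / r)) *
    mpow A (1 / 2)

/-- The weighted geometric mean `A #_t B`. -/
noncomputable def geoMean {m : Type*} [Fintype m] [DecidableEq m]
    (t : ℝ) (A B : Matrix m m ℂ) : Matrix m m ℂ :=
  powerMean 0 t A B

/-!
Put `R = A^{1/2}` and `C = R⁻¹ B R⁻¹ ≥ 0`, so that `A = R R`, `B = R C R` and
`A #_t B = R C^t R`. At the level of Kronecker products everything is then a congruence
by `R ⊗ R`: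
`(1-α) A ⊗ B + α B ⊗ A - (A #_α B) ⊗ (A #_{1-α} B)
  = (R ⊗ R) ((1-α) 1 ⊗ C + α C ⊗ 1 - C^α ⊗ C^{1-α}) (R ⊗ R)`.
Diagonalising `C` in both tensor factors at once, the middle matrix has eigenvalues
`(1-α) c_j + α c_i - c_i^α c_j^{1-α}`, which are nonnegative by weighted AM–GM.
Finally, the principal submatrix on the indices `(i, i)` turns `X ⊗ Y` into `X ∘ Y`, and
`(1-α) A ∘ B + α B ∘ A = A ∘ B`.
-/

open scoped Kronecker

namespace Matrix

section Kronecker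

variable {m : Type*}

lemma posSemidef_hadamard_sub_hadamard_of_kronecker {𝕜 : Type*} [RCLike 𝕜]
    {X Y P Q : Matrix m m 𝕜} (t : ℝ)
    (h : ((1 - t) • (X ⊗ₖ Y) + t • (Y ⊗ₖ X) - P ⊗ₖ Q).PosSemidef) :
    (X ⊙ Y - P ⊙ Q).PosSemidef := by
  convert h.submatrix (fun i : m => (i, i)) using 1
  ext i j
  simp only [sub_apply, hadamard_apply, submatrix_apply, add_apply, smul_apply,
    kroneckerMap_apply]
  rw [mul_comm (Y i j)]
  module

lemma weighted_kronecker_sub_kronecker_eq_conj [Fintype m] [DecidableEq m]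
    {S R : Type*} [CommRing S] [CommRing R] [Algebra S R] (α : S)
    (M C G H : Matrix m m R) :
    (1 - α) • ((M * M) ⊗ₖ (M * C * M)) + α • ((M * C * M) ⊗ₖ (M * M)) -
        (M * G * M) ⊗ₖ (M * H * M) =
      (M ⊗ₖ M) * ((1 - α) • (1 ⊗ₖ C) + α • (C ⊗ₖ 1) - G ⊗ₖ H) * (M ⊗ₖ M) := by
  simp only [Matrix.mul_add, Matrix.add_mul, Matrix.mul_sub, Matrix.sub_mul, mul_smul_comm,
    smul_mul_assoc, ← mul_kronecker_mul, Matrix.mul_one]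

end Kronecker

variable {m : Type*} [Fintype m] [DecidableEq m]

lemma IsHermitian.mpow_eq_cfc {A : Matrix m m ℂ} (hA : A.IsHermitian) (r : ℝ) :
    mpow A r = cfc (fun x : ℝ => x ^ r) A := by
  rw [hA.cfc_eq, mpow, matFun, dif_pos hA]
  rfl

lemma IsHermitian.isHermitian_mpow {A : Matrix m m ℂ} (hA : A.IsHermitian) (r : ℝ) :
    (mpow A r).IsHermitian := by
  rw [hA.mpow_eq_cfc]
  exact IsSelfAdjoint.cfc

lemma IsHermitian.mpow_zero {A : Matrix m m ℂ} (hA : A.IsHermitian) : mpow A 0 = 1 := by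
  simpa [hA.mpow_eq_cfc] using cfc_const_one ℝ A hA.isSelfAdjoint

lemma IsHermitian.mpow_one {A : Matrix m m ℂ} (hA : A.IsHermitian) : mpow A 1 = A := by
  simpa [hA.mpow_eq_cfc] using cfc_id' ℝ A hA.isSelfAdjoint

lemma PosDef.spectrum_pos {A : Matrix m m ℂ} (hA : A.PosDef) {x : ℝ}
    (hx : x ∈ spectrum ℝ A) : 0 < x := by
  obtain ⟨i, rfl⟩ := hA.1.spectrum_real_eq_range_eigenvalues ▸ hx
  exact hA.eigenvalues_pos i

lemma PosDef.mpow_add {A : Matrix m m ℂ} (hA : A.PosDef) (r s : ℝ) :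
    mpow A (r + s) = mpow A r * mpow A s := by
  simp only [hA.1.mpow_eq_cfc]
  rw [← cfc_mul _ _ _ (A.finite_real_spectrum.continuousOn _)
    (A.finite_real_spectrum.continuousOn _)]
  exact cfc_congr fun x hx => Real.rpow_add (hA.spectrum_pos hx) r s

lemma PosDef.mpow_half_mul_self {A : Matrix m m ℂ} (hA : A.PosDef) :
    mpow A (1 / 2) * mpow A (1 / 2) = A := by
  rw [← hA.mpow_add]
  norm_num [hA.1.mpow_one]

lemma PosDef.mpow_half_mul_mpow_neg_half {A : Matrix m m ℂ} (hA : A.PosDef) :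
    mpow A (1 / 2) * mpow A (-(1 / 2)) = 1 := by
  rw [← hA.mpow_add, add_neg_cancel, hA.1.mpow_zero]

lemma PosDef.mpow_neg_half_mul_mpow_half {A : Matrix m m ℂ} (hA : A.PosDef) :
    mpow A (-(1 / 2)) * mpow A (1 / 2) = 1 := by
  rw [← hA.mpow_add, neg_add_cancel, hA.1.mpow_zero]

lemma PosDef.mpow_half_mul_conj_mul_mpow_half {A : Matrix m m ℂ} (hA : A.PosDef)
    (B : Matrix m m ℂ) :
    mpow A (1 / 2) * (mpow A (-(1 / 2)) * B * mpow A (-(1 / 2))) * mpow A (1 / 2) = B := by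
  simp only [← mul_assoc, hA.mpow_half_mul_mpow_neg_half, one_mul]
  rw [mul_assoc, hA.mpow_neg_half_mul_mpow_half, mul_one]

lemma geoMean_eq (t : ℝ) (A B : Matrix m m ℂ) :
    geoMean t A B =
      mpow A (1 / 2) * mpow (mpow A (-(1 / 2)) * B * mpow A (-(1 / 2))) t *
        mpow A (1 / 2) := by
  simp [geoMean, powerMean]

lemma IsHermitian.cfc_kronecker_cfc {n : Type*} [Fintype n] [DecidableEq n]
    {C : Matrix m m ℂ} {D : Matrix n n ℂ} (hC : C.IsHermitian) (hD : D.IsHermitian)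
    (f g : ℝ → ℝ) :
    cfc f C ⊗ₖ cfc g D =
      ((hC.eigenvectorUnitary : Matrix m m ℂ) ⊗ₖ (hD.eigenvectorUnitary : Matrix n n ℂ)) *
        diagonal (fun p => ((f (hC.eigenvalues p.1) * g (hD.eigenvalues p.2) : ℝ) : ℂ)) *
        ((hC.eigenvectorUnitary : Matrix m m ℂ) ⊗ₖ (hD.eigenvectorUnitary : Matrix n n ℂ))ᴴ := by
  simp only [hC.cfc_eq, hD.cfc_eq, IsHermitian.cfc, Unitary.conjStarAlgAut_apply,
    mul_kronecker_mul, diagonal_kronecker_diagonal, conjTranspose_kronecker,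
    star_eq_conjTranspose]
  congr 3
  ext p
  push_cast
  rfl

lemma IsHermitian.weighted_kronecker_sub_mpow_kronecker {C : Matrix m m ℂ}
    (hC : C.IsHermitian) (α : ℝ) :
    (1 - α) • ((1 : Matrix m m ℂ) ⊗ₖ C) + α • (C ⊗ₖ 1) - mpow C α ⊗ₖ mpow C (1 - α) =
      ((hC.eigenvectorUnitary : Matrix m m ℂ) ⊗ₖ (hC.eigenvectorUnitary : Matrix m m ℂ)) *
        diagonal (fun p : m × m => (((1 - α) * hC.eigenvalues p.2 + α * hC.eigenvalues p.1 -
          hC.eigenvalues p.1 ^ α * hC.eigenvalues p.2 ^ (1 - α) : ℝ) : ℂ)) *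
        ((hC.eigenvectorUnitary : Matrix m m ℂ) ⊗ₖ (hC.eigenvectorUnitary : Matrix m m ℂ))ᴴ := by
  set V := (hC.eigenvectorUnitary : Matrix m m ℂ) ⊗ₖ (hC.eigenvectorUnitary : Matrix m m ℂ)
  set c := hC.eigenvalues
  have hkron (f g : ℝ → ℝ) :
      cfc f C ⊗ₖ cfc g C = V * diagonal (fun p => ((f (c p.1) * g (c p.2) : ℝ) : ℂ)) * Vᴴ :=
    hC.cfc_kronecker_cfc hC f g
  have h1C : (1 : Matrix m m ℂ) ⊗ₖ C =
      V * diagonal (fun p : m × m => ((1 * c p.2 : ℝ) : ℂ)) * Vᴴ := by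
    have := hkron (fun _ => 1) (fun x => x)
    rwa [cfc_const_one ℝ C hC.isSelfAdjoint, cfc_id' ℝ C hC.isSelfAdjoint] at this
  have hC1 : C ⊗ₖ (1 : Matrix m m ℂ) =
      V * diagonal (fun p : m × m => ((c p.1 * 1 : ℝ) : ℂ)) * Vᴴ := by
    have := hkron (fun x => x) (fun _ => 1)
    rwa [cfc_const_one ℝ C hC.isSelfAdjoint, cfc_id' ℝ C hC.isSelfAdjoint] at this
  have hdiag : diagonal (fun p : m × m =>
        (((1 - α) * c p.2 + α * c p.1 - c p.1 ^ α * c p.2 ^ (1 - α) : ℝ) : ℂ)) =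
      (1 - α) • diagonal (fun p : m × m => ((1 * c p.2 : ℝ) : ℂ)) +
        α • diagonal (fun p : m × m => ((c p.1 * 1 : ℝ) : ℂ)) -
        diagonal (fun p : m × m => ((c p.1 ^ α * c p.2 ^ (1 - α) : ℝ) : ℂ)) := by
    ext p q
    by_cases hpq : p = q <;> simp [hpq, Complex.real_smul]
  rw [hdiag, hC.mpow_eq_cfc, hC.mpow_eq_cfc, hkron, h1C, hC1]
  simp only [Matrix.mul_add, Matrix.add_mul, Matrix.mul_sub, Matrix.sub_mul, mul_smul_comm,
    smul_mul_assoc]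

lemma PosSemidef.kronecker_weighted_amgm {C : Matrix m m ℂ} (hC : C.PosSemidef)
    {α : ℝ} (hα0 : 0 ≤ α) (hα1 : α ≤ 1) :
    ((1 - α) • (1 ⊗ₖ C) + α • (C ⊗ₖ 1) - mpow C α ⊗ₖ mpow C (1 - α)).PosSemidef := by
  rw [hC.1.weighted_kronecker_sub_mpow_kronecker]
  refine (PosSemidef.diagonal fun p => ?_).mul_mul_conjTranspose_same _
  have hamgm : hC.1.eigenvalues p.1 ^ α * hC.1.eigenvalues p.2 ^ (1 - α) ≤
      α * hC.1.eigenvalues p.1 + (1 - α) * hC.1.eigenvalues p.2 :=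
    Real.geom_mean_le_arith_mean2_weighted hα0 (by linarith) (hC.eigenvalues_nonneg _)
      (hC.eigenvalues_nonneg _) (by ring)
  simp only [Pi.zero_apply]
  exact_mod_cast (by linarith : (0 : ℝ) ≤ _)

end Matrix

theorem hadamard_geoMean_inequality {n : ℕ} (A B : Matrix (Fin n) (Fin n) ℂ)
    (hA : A.PosDef) (hB : B.PosDef) (α : ℝ) (hα : α ∈ Set.Icc (0 : ℝ) 1) :
    (A.hadamard B - (geoMean α A B).hadamard (geoMean (1 - α) A B)).PosSemidef := by
  have hC := hB.posSemidef.conjTranspose_mul_mul_same (mpow A (-(1 / 2)))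
  rw [(hA.1.isHermitian_mpow _).eq] at hC
  set R := mpow A (1 / 2)
  set C := mpow A (-(1 / 2)) * B * mpow A (-(1 / 2))
  have hRR : (R ⊗ₖ R)ᴴ = R ⊗ₖ R := by
    rw [conjTranspose_kronecker, (hA.1.isHermitian_mpow _).eq]
  have hAR : A = R * R := hA.mpow_half_mul_self.symm
  have hBR : B = R * C * R := (hA.mpow_half_mul_conj_mul_mpow_half B).symm
  have hG (t : ℝ) : geoMean t A B = R * mpow C t * R := geoMean_eq t A B
  refine posSemidef_hadamard_sub_hadamard_of_kronecker α ?_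
  rw [hG, hG, hAR, hBR, weighted_kronecker_sub_kronecker_eq_conj]
  simpa only [hRR] using
    (hC.kronecker_weighted_amgm hα.1 hα.2).conjTranspose_mul_mul_same (R ⊗ₖ R)
end

section
/- For positive definite n×n matrices A and B and α ∈ [0,1], A ∘ B ≥ (A !_α B) ∘ (A !_{1-α} B) in the Loewner order, where A !_α B = ((1-α)A^{-1} + αB^{-1})^{-1} is the weighted harmonic mean. -/
open Matrix ComplexOrder

section Aux

variable {n : ℕ} {m : Type*} [Fintype m] [DecidableEq m]

private lemma real_smul_eqc (r : ℝ) (M : Matrix m m ℂ) :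
    r • M = (r : ℂ) • M := by
  ext i j
  simp [Complex.real_smul]

omit [DecidableEq m] in
private lemma psd_smul {M : Matrix m m ℂ} (hM : M.PosSemidef) {r : ℝ} (hr : 0 ≤ r) :
    ((r : ℂ) • M).PosSemidef := by
  refine posSemidef_iff_dotProduct_mulVec.mpr ⟨?_, ?_⟩
  · ext i j
    simp [conjTranspose_apply, hM.1.apply]
  · intro x
    rw [smul_mulVec, dotProduct_smul, smul_eq_mul]
    exact mul_nonneg (by exact_mod_cast hr) (hM.dotProduct_mulVec_nonneg x)

omit [DecidableEq m] in
private lemma pd_smul {M : Matrix m m ℂ} (hM : M.PosDef) {r : ℝ} (hr : 0 < r) :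
    ((r : ℂ) • M).PosDef := by
  refine posDef_iff_dotProduct_mulVec.mpr ⟨?_, ?_⟩
  · ext i j
    simp [conjTranspose_apply, hM.1.apply]
  · intro x hx
    rw [smul_mulVec, dotProduct_smul, smul_eq_mul]
    exact mul_pos (by exact_mod_cast hr) (hM.dotProduct_mulVec_pos hx)

private noncomputable def pd_invertible {A : Matrix m m ℂ} (hA : A.PosDef) : Invertible A :=
  A.invertibleOfIsUnitDet (isUnit_iff_ne_zero.mpr hA.det_pos.ne')

/-- Schur product theorem. -/
private lemma psd_hadamard {A B : Matrix m m ℂ}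
    (hA : A.PosSemidef) (hB : B.PosSemidef) : (A.hadamard B).PosSemidef := by
  obtain ⟨C, hC⟩ : ∃ C : Matrix m m ℂ, B = Cᴴ * C := by
    open scoped MatrixOrder in
    exact CStarAlgebra.nonneg_iff_eq_star_mul_self.mp hB.nonneg
  refine posSemidef_iff_dotProduct_mulVec.mpr ⟨?_, ?_⟩
  · ext i j
    simp only [conjTranspose_apply, hadamard_apply, star_mul']
    rw [← conjTranspose_apply, ← conjTranspose_apply, hA.1, hB.1]
  · intro x
    have key : star x ⬝ᵥ ((A.hadamard B) *ᵥ x)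
        = ∑ k, star (fun i => C k i * x i) ⬝ᵥ (A *ᵥ (fun i => C k i * x i)) := by
      subst hC
      simp only [dotProduct, mulVec, hadamard_apply, Matrix.mul_apply, conjTranspose_apply,
        Pi.star_apply, Finset.mul_sum, Finset.sum_mul, star_mul']
      conv_lhs => enter [2, a]; rw [Finset.sum_comm]
      conv_lhs => rw [Finset.sum_comm]
      conv_lhs => enter [2, c]; rw [Finset.sum_comm]
      conv_lhs => enter [2, c]; rw [Finset.sum_comm]
      refine Finset.sum_congr rfl fun k _ => ?_
      refine Finset.sum_congr rfl fun i _ => Finset.sum_congr rfl fun j _ => ?_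
      ring
    rw [key]
    exact Finset.sum_nonneg fun k _ => hA.dotProduct_mulVec_nonneg _

private lemma blocks_psd_implies {S T U : Matrix m m ℂ}
    (h : (fromBlocks S T Tᴴ U).PosSemidef) : (S + U - T - Tᴴ).PosSemidef := by
  have h1 := h.1
  rw [isHermitian_fromBlocks_iff] at h1
  refine posSemidef_iff_dotProduct_mulVec.mpr ⟨?_, ?_⟩
  · rw [sub_sub]
    have hT : (T + Tᴴ).IsHermitian := by
      unfold Matrix.IsHermitian
      rw [conjTranspose_add, conjTranspose_conjTranspose, add_comm]
    exact (h1.1.add h1.2.2.2).sub hT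
  · intro x
    have h2 := h.dotProduct_mulVec_nonneg (Sum.elim x (-x))
    rw [Function.star_sumElim, fromBlocks_mulVec, sumElim_dotProduct_sumElim] at h2
    simp only [mulVec_neg, star_neg, neg_dotProduct, dotProduct_add, dotProduct_neg,
      Sum.elim_comp_inl, Sum.elim_comp_inr] at h2
    simp only [sub_mulVec, add_mulVec, dotProduct_sub, dotProduct_add]
    convert h2 using 1
    ring

private lemma psd_block_of_pd {A : Matrix m m ℂ} (hA : A.PosDef) :
    (fromBlocks A 1 1 A⁻¹).PosSemidef := by
  haveI := pd_invertible hA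
  have h0 : (A⁻¹ - (1 : Matrix m m ℂ)ᴴ * A⁻¹ * 1).PosSemidef := by
    simp only [conjTranspose_one, Matrix.one_mul, Matrix.mul_one, sub_self]
    exact Matrix.PosSemidef.zero
  have := (PosDef.fromBlocks₁₁ (1 : Matrix m m ℂ) A⁻¹ hA).mpr h0
  simpa using this

/-- matrix AM-HM inequality -/
private lemma am_hm {A B : Matrix m m ℂ} (hA : A.PosDef) (hB : B.PosDef)
    {a b : ℝ} (ha : 0 ≤ a) (hb : 0 ≤ b) (hab : a + b = 1) :
    ((a : ℂ) • A + (b : ℂ) • B - ((a : ℂ) • A⁻¹ + (b : ℂ) • B⁻¹)⁻¹).PosSemidef := by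
  have hX : ((a : ℂ) • A⁻¹ + (b : ℂ) • B⁻¹).PosDef := by
    rcases lt_or_ge 0 a with hpa | hpa
    · exact (pd_smul hA.inv hpa).add_posSemidef (psd_smul hB.inv.posSemidef hb)
    · have ha0 : a = 0 := le_antisymm hpa ha
      have hb1 : b = 1 := by linarith
      simp only [ha0, hb1, Complex.ofReal_zero, Complex.ofReal_one, zero_smul, one_smul, zero_add]
      exact hB.inv
  haveI := pd_invertible hX
  have h1 := (psd_smul (psd_block_of_pd hA) ha).add (psd_smul (psd_block_of_pd hB) hb)
  rw [fromBlocks_smul, fromBlocks_smul, fromBlocks_add] at h1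
  have hone : (a : ℂ) • (1 : Matrix m m ℂ) + (b : ℂ) • 1 = 1 := by
    rw [← add_smul, ← Complex.ofReal_add, hab, Complex.ofReal_one, one_smul]
  rw [hone] at h1
  have h2 := (PosDef.fromBlocks₂₂ ((a : ℂ) • A + (b : ℂ) • B)
      (1 : Matrix m m ℂ) hX).mp (by simpa using h1)
  simpa using h2

private lemma hadamard_fromBlocks (A B C D A' B' C' D' : Matrix m m ℂ) :
    (fromBlocks A B C D).hadamard (fromBlocks A' B' C' D')
      = fromBlocks (A.hadamard A') (B.hadamard B') (C.hadamard C') (D.hadamard D') := by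
  ext (i | i) (j | j) <;> simp [fromBlocks, hadamard]

private lemma parallel_sum_blocks {P Q : Matrix m m ℂ} (hP : P.PosDef) (hQ : Q.PosDef) :
    (fromBlocks (P - (P⁻¹ + Q⁻¹)⁻¹) ((P⁻¹ + Q⁻¹)⁻¹) ((P⁻¹ + Q⁻¹)⁻¹)
      (Q - (P⁻¹ + Q⁻¹)⁻¹)).PosSemidef := by
  have hDpd : (P + Q).PosDef := hP.add hQ
  haveI := pd_invertible hP
  haveI := pd_invertible hQ
  haveI := pd_invertible hDpd
  have hPd : IsUnit P.det := P.isUnit_det_of_invertible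
  have hQd : IsUnit Q.det := Q.isUnit_det_of_invertible
  have hDd : IsUnit (P + Q).det := (P + Q).isUnit_det_of_invertible
  set E := (P + Q)⁻¹ with hE
  have hEpd : E.PosDef := hDpd.inv
  haveI := pd_invertible hEpd
  have hsum1 : P⁻¹ + Q⁻¹ = P⁻¹ * (P + Q) * Q⁻¹ := by
    rw [Matrix.mul_add, Matrix.add_mul, Matrix.nonsing_inv_mul _ hPd, Matrix.one_mul,
      Matrix.mul_assoc, Matrix.mul_nonsing_inv _ hQd, Matrix.mul_one]
    exact add_comm _ _
  have hsum2 : P⁻¹ + Q⁻¹ = Q⁻¹ * (P + Q) * P⁻¹ := by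
    rw [Matrix.mul_add, Matrix.add_mul, Matrix.nonsing_inv_mul _ hQd, Matrix.one_mul,
      Matrix.mul_assoc, Matrix.mul_nonsing_inv _ hPd, Matrix.mul_one]
    exact add_comm _ _
  have hR1 : (P⁻¹ + Q⁻¹)⁻¹ = Q * E * P := by
    rw [hsum1, Matrix.mul_inv_rev, Matrix.mul_inv_rev,
      Matrix.nonsing_inv_nonsing_inv _ hPd, Matrix.nonsing_inv_nonsing_inv _ hQd,
      Matrix.mul_assoc]
  have hR2 : (P⁻¹ + Q⁻¹)⁻¹ = P * E * Q := by
    rw [hsum2, Matrix.mul_inv_rev, Matrix.mul_inv_rev,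
      Matrix.nonsing_inv_nonsing_inv _ hPd, Matrix.nonsing_inv_nonsing_inv _ hQd,
      Matrix.mul_assoc]
  have hED : E * (P + Q) = 1 := Matrix.nonsing_inv_mul _ hDd
  have hPR : P - (P⁻¹ + Q⁻¹)⁻¹ = P * E * P := by
    have h : P * E * P + P * E * Q = P := by
      rw [Matrix.mul_assoc, Matrix.mul_assoc, ← Matrix.mul_add, ← Matrix.mul_add, hED,
        Matrix.mul_one]
    rw [hR2]
    exact (eq_sub_of_add_eq h).symm
  have hQR : Q - (P⁻¹ + Q⁻¹)⁻¹ = Q * E * Q := by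
    have h : Q * E * Q + Q * E * P = Q := by
      rw [Matrix.mul_assoc, Matrix.mul_assoc, ← Matrix.mul_add, ← Matrix.mul_add, add_comm Q P,
        hED, Matrix.mul_one]
    rw [hR1]
    exact (eq_sub_of_add_eq h).symm
  have hbase : (fromBlocks E 0 0 0 : Matrix (m ⊕ m) (m ⊕ m) ℂ).PosSemidef := by
    have h0 : ((0 : Matrix m m ℂ) - (0 : Matrix m m ℂ)ᴴ * E⁻¹ * 0).PosSemidef := by
      simp only [conjTranspose_zero, Matrix.mul_zero, sub_zero]
      exact Matrix.PosSemidef.zero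
    have := (PosDef.fromBlocks₁₁ (0 : Matrix m m ℂ) 0 hEpd).mpr h0
    simpa using this
  have hW := hbase.mul_mul_conjTranspose_same (fromBlocks P 0 Q 0)
  have he : fromBlocks P 0 Q 0 * fromBlocks E 0 0 0 * (fromBlocks P 0 Q 0)ᴴ
      = fromBlocks (P * E * P) (P * E * Q) (Q * E * P) (Q * E * Q) := by
    rw [fromBlocks_conjTranspose, fromBlocks_multiply, fromBlocks_multiply]
    simp [hP.1.eq, hQ.1.eq]
  rw [he] at hW
  have hcross : Q * E * P = P * E * Q := hR1.symm.trans hR2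
  rw [hPR, hQR, hR1]
  nth_rewrite 1 [hcross]
  exact hW

private lemma blocks_psd_implies' {S T U : Matrix m m ℂ} (hT : Tᴴ = T)
    (h : (fromBlocks S T T U).PosSemidef) : (S + U - T - T).PosSemidef := by
  have h' : (fromBlocks S T Tᴴ U).PosSemidef := by rw [hT]; exact h
  have := blocks_psd_implies h'
  rwa [hT] at this

/-- key lemma: P∘Q ≥ (P+Q)∘(P:Q) for the parallel sum P:Q. -/
private lemma parallel_sum_hadamard {P Q : Matrix m m ℂ} (hP : P.PosDef) (hQ : Q.PosDef) :
    (P.hadamard Q - (P + Q).hadamard ((P⁻¹ + Q⁻¹)⁻¹)).PosSemidef := by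
  set R := (P⁻¹ + Q⁻¹)⁻¹ with hRdef
  have hRpd : R.PosDef := (hP.inv.add hQ.inv).inv
  have hM := parallel_sum_blocks hP hQ
  have hN := parallel_sum_blocks hQ hP
  rw [add_comm Q⁻¹ P⁻¹] at hN
  have hH := psd_hadamard hM hN
  rw [hadamard_fromBlocks] at hH
  have hRR : (R.hadamard R)ᴴ = R.hadamard R := by
    ext i j
    simp only [conjTranspose_apply, hadamard_apply, star_mul']
    rw [← conjTranspose_apply, hRpd.1]
  have key := blocks_psd_implies' hRR hH
  have e : P.hadamard Q - (P + Q).hadamard R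
      = ((1/2 : ℝ) : ℂ) • ((P - R).hadamard (Q - R) + (Q - R).hadamard (P - R)
          - R.hadamard R - R.hadamard R) := by
    ext i j
    simp only [Matrix.sub_apply, Matrix.add_apply, Matrix.smul_apply, hadamard_apply,
      smul_eq_mul]
    push_cast
    ring
  rw [e]
  exact psd_smul key (by norm_num)

end Aux

/-- The weighted harmonic mean `A !_α B = ((1-α)A⁻¹ + αB⁻¹)⁻¹`. -/
noncomputable def harmMean {n : ℕ} (α : ℝ) (A B : Matrix (Fin n) (Fin n) ℂ) :
    Matrix (Fin n) (Fin n) ℂ :=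
  ((1 - α) • A⁻¹ + α • B⁻¹)⁻¹

theorem hadamard_harmMean_inequality {n : ℕ} (A B : Matrix (Fin n) (Fin n) ℂ)
    (hA : A.PosDef) (hB : B.PosDef) (α : ℝ) (hα : α ∈ Set.Icc (0 : ℝ) 1) :
    (A.hadamard B - (harmMean α A B).hadamard (harmMean (1 - α) A B)).PosSemidef := by
  obtain ⟨h0, h1⟩ := hα
  haveI := pd_invertible hA
  haveI := pd_invertible hB
  have hAd : IsUnit A.det := A.isUnit_det_of_invertible
  have hBd : IsUnit B.det := B.isUnit_det_of_invertible
  rcases eq_or_lt_of_le h0 with h0' | h0'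
  · -- α = 0
    have e0 : harmMean α A B = A := by
      rw [harmMean, ← h0']
      simp [Matrix.nonsing_inv_nonsing_inv _ hAd]
    have e1 : harmMean (1 - α) A B = B := by
      rw [harmMean, ← h0']
      simp [Matrix.nonsing_inv_nonsing_inv _ hBd]
    rw [e0, e1, sub_self]
    exact Matrix.PosSemidef.zero
  rcases eq_or_lt_of_le h1 with h1' | h1'
  · -- α = 1
    have e0 : harmMean α A B = B := by
      rw [harmMean, h1']
      simp [Matrix.nonsing_inv_nonsing_inv _ hBd]
    have e1 : harmMean (1 - α) A B = A := by
      rw [harmMean, h1']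
      simp [Matrix.nonsing_inv_nonsing_inv _ hAd]
    rw [e0, e1, hadamard_comm, sub_self]
    exact Matrix.PosSemidef.zero
  -- 0 < α < 1
  have hα0 : (0 : ℝ) < α := h0'
  have hα1 : (0 : ℝ) < 1 - α := by linarith
  have hαc : (α : ℂ) ≠ 0 := by exact_mod_cast hα0.ne'
  have hβc : ((1 - α : ℝ) : ℂ) ≠ 0 := by exact_mod_cast hα1.ne'
  set P := ((α⁻¹ : ℝ) : ℂ) • A with hPdef
  set Q := (((1 - α)⁻¹ : ℝ) : ℂ) • B with hQdef
  have hPpd : P.PosDef := pd_smul hA (inv_pos.mpr hα0)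
  have hQpd : Q.PosDef := pd_smul hB (inv_pos.mpr hα1)
  haveI : Invertible ((α⁻¹ : ℝ) : ℂ) := invertibleOfNonzero (by
    exact_mod_cast (inv_pos.mpr hα0).ne')
  haveI : Invertible (((1 - α)⁻¹ : ℝ) : ℂ) := invertibleOfNonzero (by
    exact_mod_cast (inv_pos.mpr hα1).ne')
  have hPinv : P⁻¹ = ((α : ℝ) : ℂ) • A⁻¹ := by
    rw [hPdef, Matrix.inv_smul _ _ hAd, invOf_eq_inv]
    norm_num
  have hQinv : Q⁻¹ = ((1 - α : ℝ) : ℂ) • B⁻¹ := by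
    rw [hQdef, Matrix.inv_smul _ _ hBd, invOf_eq_inv]
    norm_num
  have hReq : (P⁻¹ + Q⁻¹)⁻¹ = harmMean (1 - α) A B := by
    rw [hPinv, hQinv, harmMean, real_smul_eqc, real_smul_eqc]
    norm_num
  have key := parallel_sum_hadamard hPpd hQpd
  rw [hReq] at key
  set R := harmMean (1 - α) A B with hRdef
  have hRpd : R.PosDef := by
    rw [hRdef, harmMean, real_smul_eqc, real_smul_eqc]
    refine Matrix.PosDef.inv ?_
    have h1α : (1 : ℝ) - (1 - α) = α := by ring
    rw [h1α]
    exact (pd_smul hA.inv hα0).add_posSemidef (psd_smul hB.inv.posSemidef hα1.le)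
  have scaled := psd_smul key (r := α * (1 - α)) (by positivity)
  have e1 : ((α * (1 - α) : ℝ) : ℂ) • (P.hadamard Q - (P + Q).hadamard R)
      = A.hadamard B - (((1 - α : ℝ) : ℂ) • A + ((α : ℝ) : ℂ) • B).hadamard R := by
    have c1 : ((α * (1 - α) : ℝ) : ℂ) * ((α⁻¹ : ℝ) : ℂ) = ((1 - α : ℝ) : ℂ) := by
      rw [← Complex.ofReal_mul]
      congr 1
      field_simp
    have c2 : ((α * (1 - α) : ℝ) : ℂ) * (((1 - α)⁻¹ : ℝ) : ℂ) = ((α : ℝ) : ℂ) := by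
      rw [← Complex.ofReal_mul]
      congr 1
      field_simp
    have c3 : ((α * (1 - α) : ℝ) : ℂ) * (((α⁻¹ : ℝ) : ℂ) * (((1 - α)⁻¹ : ℝ) : ℂ)) = 1 := by
      rw [← Complex.ofReal_mul, ← Complex.ofReal_mul]
      rw [show α * (1 - α) * (α⁻¹ * (1 - α)⁻¹) = 1 by field_simp]
      norm_num
    ext i j
    simp only [Matrix.sub_apply, Matrix.add_apply, Matrix.smul_apply, hadamard_apply,
      hPdef, hQdef, smul_eq_mul]
    linear_combination A i j * B i j * c3 - A i j * R i j * c1 - B i j * R i j * c2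
  rw [e1] at scaled
  have amhm := am_hm hA hB hα1.le hα0.le (by ring)
  have hHeq : (((1 - α : ℝ) : ℂ) • A⁻¹ + ((α : ℝ) : ℂ) • B⁻¹)⁻¹ = harmMean α A B := by
    rw [harmMean, real_smul_eqc, real_smul_eqc]
  rw [hHeq] at amhm
  have step := psd_hadamard amhm hRpd.posSemidef
  have final := scaled.add step
  have e2 : A.hadamard B - (((1 - α : ℝ) : ℂ) • A + ((α : ℝ) : ℂ) • B).hadamard R
      + ((((1 - α : ℝ) : ℂ) • A + ((α : ℝ) : ℂ) • B) - harmMean α A B).hadamard R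
      = A.hadamard B - (harmMean α A B).hadamard R := by
    ext i j
    simp only [Matrix.sub_apply, Matrix.add_apply, Matrix.smul_apply, hadamard_apply,
      smul_eq_mul]
    ring
  rwa [e2] at final
end

section
/- Let A_1,...,A_n and B_1,...,B_n be positive definite n×n matrices that are increasing sequences in the Loewner order (A_1 ≤ A_2 ≤ ... ≤ A_n, B_1 ≤ ... ≤ B_n), and let ω_1,...,ω_n be nonnegative reals. Then for α ∈ [0,1]: (∑_i ω_i)(∑_j ω_j (A_j ∘ B_j)) ≥ (∑_i ω_i (A_i #_α B_i)) ∘ (∑_j ω_j (A_j #_{1-α} B_j)) in the Loewner order, where #_α is the weighted geometric mean. -/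
open Matrix ComplexOrder

/-!
Diagonalizing `T = A^{-1/2} B A^{-1/2}` writes the whole path `r ↦ A #_r B` as `∑ₖ tₖ^r Pₖ` with
`tₖ ≥ 0` and `Pₖ ⪰ 0`; in particular `A = ∑ₖ Pₖ` and `B = ∑ₖ tₖ Pₖ`. Expanding Hadamard products
of two such paths, the weighted AM-GM inequality `t^α s^{1-α} ≤ α t + (1-α) s` and the Schur
product theorem give `(A #_α B) ∘ (C #_{1-α} D) ≤ α B ∘ C + (1-α) A ∘ D`. Adding this to the same
inequality with the two pairs swapped and to `(C - A) ∘ (D - B) ≥ 0` gives, for `i ≤ j` and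
`Xᵢ = Aᵢ #_α Bᵢ`, `Yᵢ = Aᵢ #_{1-α} Bᵢ`, the pairwise bound `Xᵢ ∘ Yⱼ + Xⱼ ∘ Yᵢ ≤ Aᵢ ∘ Bᵢ + Aⱼ ∘ Bⱼ`.
Summing it with weights `ωᵢ ωⱼ` is Chebyshev's sum inequality.
-/

theorem Matrix.sum_hadamard_sum {m n α ι κ : Type*} [NonUnitalNonAssocSemiring α]
    (s : Finset ι) (t : Finset κ) (P : ι → Matrix m n α) (Q : κ → Matrix m n α) :
    (∑ k ∈ s, P k) ⊙ (∑ l ∈ t, Q l) = ∑ k ∈ s, ∑ l ∈ t, P k ⊙ Q l := by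
  ext i j
  simp only [hadamard_apply, Matrix.sum_apply, Finset.sum_mul_sum]

section Hadamard

variable {m 𝕜 : Type*} [RCLike 𝕜]

theorem posSemidef_sum_sum_smul_hadamard {ι κ : Type*} (s : Finset ι) (t : Finset κ)
    {c : ι → κ → ℝ} (hc : ∀ k l, 0 ≤ c k l) {P : ι → Matrix m m 𝕜} {Q : κ → Matrix m m 𝕜}
    (hP : ∀ k, (P k).PosSemidef) (hQ : ∀ l, (Q l).PosSemidef) :
    (∑ k ∈ s, ∑ l ∈ t, c k l • P k ⊙ Q l).PosSemidef :=
  posSemidef_sum _ fun k _ => posSemidef_sum _ fun l _ =>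
    ((hP k).hadamard (hQ l)).smul (hc k l)

theorem posSemidef_chebyshev_hadamard {ι : Type*} [Fintype ι] [LinearOrder ι]
    {ω : ι → ℝ} (hω : ∀ i, 0 ≤ ω i) {M X Y : ι → Matrix m m 𝕜}
    (h : ∀ i j, i ≤ j → (M i + M j - X i ⊙ Y j - X j ⊙ Y i).PosSemidef) :
    ((∑ i, ω i) • ∑ i, ω i • M i - (∑ i, ω i • X i) ⊙ ∑ i, ω i • Y i).PosSemidef := by
  set F : ι → ι → Matrix m m 𝕜 := fun i j => M i - X i ⊙ Y j
  have hF : ∀ i j, (F i j + F j i).PosSemidef := by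
    intro i j
    rcases le_total i j with hij | hji
    · convert h i j hij using 1
      dsimp only [F]
      abel
    · convert h j i hji using 1
      dsimp only [F]
      abel
  have hM : (∑ i, ω i) • ∑ i, ω i • M i = ∑ i, ∑ j, (ω i * ω j) • M i := by
    simp only [← Finset.sum_smul, ← Finset.mul_sum, Finset.smul_sum, smul_smul, mul_comm]
  have hXY : (∑ i, ω i • X i) ⊙ ∑ i, ω i • Y i = ∑ i, ∑ j, (ω i * ω j) • X i ⊙ Y j := by
    simp only [sum_hadamard_sum, smul_hadamard, hadamard_smul, smul_smul, mul_comm]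
  have hsymm : (2 : ℝ) • ∑ i, ∑ j, (ω i * ω j) • F i j
      = ∑ i, ∑ j, (ω i * ω j) • (F i j + F j i) := by
    simp only [smul_add, Finset.sum_add_distrib, two_smul]
    rw [Finset.sum_comm (f := fun i j => (ω i * ω j) • F j i)]
    simp only [mul_comm]
  have hpos : ((2 : ℝ) • ∑ i, ∑ j, (ω i * ω j) • F i j).PosSemidef := by
    rw [hsymm]
    exact posSemidef_sum _ fun i _ => posSemidef_sum _ fun j _ =>
      (hF i j).smul (mul_nonneg (hω i) (hω j))
  rw [hM, hXY]
  simp only [← Finset.sum_sub_distrib, ← smul_sub]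
  simpa only [smul_smul, one_div, inv_mul_cancel₀ (two_ne_zero' ℝ), one_smul] using
    hpos.smul (a := (1 / 2 : ℝ)) (by norm_num)

theorem posSemidef_young_hadamard_sum_rpow_smul {ι κ : Type*} [Fintype ι] [Fintype κ]
    {t : ι → ℝ} {s : κ → ℝ} (ht : ∀ k, 0 ≤ t k) (hs : ∀ l, 0 ≤ s l)
    {P : ι → Matrix m m 𝕜} {Q : κ → Matrix m m 𝕜}
    (hP : ∀ k, (P k).PosSemidef) (hQ : ∀ l, (Q l).PosSemidef) {α : ℝ} (h0 : 0 ≤ α) (h1 : α ≤ 1) :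
    (α • ((∑ k, t k • P k) ⊙ ∑ l, Q l) + (1 - α) • ((∑ k, P k) ⊙ ∑ l, s l • Q l)
      - (∑ k, t k ^ α • P k) ⊙ ∑ l, s l ^ (1 - α) • Q l).PosSemidef := by
  have hsum : α • ((∑ k, t k • P k) ⊙ ∑ l, Q l) + (1 - α) • ((∑ k, P k) ⊙ ∑ l, s l • Q l)
      - (∑ k, t k ^ α • P k) ⊙ ∑ l, s l ^ (1 - α) • Q l
      = ∑ k, ∑ l, (α * t k + (1 - α) * s l - t k ^ α * s l ^ (1 - α)) • P k ⊙ Q l := by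
    simp only [sum_hadamard_sum, Finset.smul_sum, ← Finset.sum_add_distrib,
      ← Finset.sum_sub_distrib, smul_hadamard, hadamard_smul]
    refine Finset.sum_congr rfl fun k _ => Finset.sum_congr rfl fun l _ => ?_
    module
  rw [hsum]
  refine posSemidef_sum_sum_smul_hadamard _ _ (fun k l => ?_) hP hQ
  have := Real.geom_mean_le_arith_mean2_weighted h0 (sub_nonneg.2 h1) (ht k) (hs l)
    (add_sub_cancel α 1)
  linarith

end Hadamard

section MatrixPower

variable {m : Type*} [Fintype m] [DecidableEq m] {A B C D : Matrix m m ℂ}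

theorem mpow_of_isHermitian (hA : A.IsHermitian) (r : ℝ) :
    mpow A r = (hA.eigenvectorUnitary : Matrix m m ℂ) *
      diagonal (fun i => ((hA.eigenvalues i ^ r : ℝ) : ℂ)) *
      star (hA.eigenvectorUnitary : Matrix m m ℂ) := by
  rw [mpow, matFun, dif_pos hA]

theorem mpow_isHermitian (hA : A.IsHermitian) (r : ℝ) : (mpow A r).IsHermitian := by
  rw [mpow_of_isHermitian hA r, star_eq_conjTranspose]
  exact isHermitian_mul_mul_conjTranspose _
    (isHermitian_diagonal_of_self_adjoint _ (funext fun i => Complex.conj_ofReal _))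

theorem mpow_zero (hA : A.IsHermitian) : mpow A 0 = 1 := by
  simp only [mpow_of_isHermitian hA, Real.rpow_zero, Complex.ofReal_one, diagonal_one,
    Matrix.mul_one]
  exact mem_unitaryGroup_iff.mp hA.eigenvectorUnitary.2

theorem mpow_one (hA : A.IsHermitian) : mpow A 1 = A := by
  simp only [mpow_of_isHermitian hA, Real.rpow_one]
  exact hA.spectral_theorem.symm

theorem mpow_mul_mpow (hA : A.PosDef) (r s : ℝ) : mpow A r * mpow A s = mpow A (r + s) := by
  have hU : star (hA.1.eigenvectorUnitary : Matrix m m ℂ) * hA.1.eigenvectorUnitary = 1 :=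
    mem_unitaryGroup_iff'.mp hA.1.eigenvectorUnitary.2
  simp only [mpow_of_isHermitian hA.1, Matrix.mul_assoc]
  rw [← Matrix.mul_assoc (star _), hU, Matrix.one_mul, ← Matrix.mul_assoc (diagonal _),
    diagonal_mul_diagonal]
  simp only [← Complex.ofReal_mul, ← Real.rpow_add (hA.eigenvalues_pos _)]

theorem mul_diagonal_mul_star_eq_sum_vecMulVec (V : Matrix m m ℂ) (d : m → ℝ) :
    V * diagonal (fun i => (d i : ℂ)) * star V
      = ∑ k, d k • vecMulVec (fun i => V i k) (star fun i => V i k) := by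
  ext i j
  rw [Matrix.mul_apply, Matrix.sum_apply]
  simp only [mul_diagonal, star_apply, Matrix.smul_apply,
    vecMulVec_apply, Pi.star_apply, Complex.real_smul]
  exact Finset.sum_congr rfl fun k _ => by ring

theorem posSemidef_mpow_mul_mul_mpow (hA : A.IsHermitian) (hB : B.PosSemidef) (r : ℝ) :
    (mpow A r * B * mpow A r).PosSemidef := by
  simpa only [(mpow_isHermitian hA r).eq] using hB.conjTranspose_mul_mul_same (mpow A r)

theorem isHermitian_mpow_mul_mul_mpow (hA : A.IsHermitian) (hB : B.IsHermitian) (r : ℝ) :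
    (mpow A r * B * mpow A r).IsHermitian := by
  simpa only [(mpow_isHermitian hA r).eq] using isHermitian_conjTranspose_mul_mul (mpow A r) hB

theorem geoMean_eq_mpow (t : ℝ) (A B : Matrix m m ℂ) :
    geoMean t A B = mpow A (1 / 2) * mpow (mpow A (-(1 / 2)) * B * mpow A (-(1 / 2))) t *
      mpow A (1 / 2) := by
  rw [geoMean, powerMean, if_pos rfl]

theorem exists_geoMean_eq_sum_rpow_smul (hA : A.IsHermitian) (hB : B.PosSemidef) :
    ∃ (t : m → ℝ) (P : m → Matrix m m ℂ), (∀ k, 0 ≤ t k) ∧ (∀ k, (P k).PosSemidef) ∧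
      ∀ r, geoMean r A B = ∑ k, t k ^ r • P k := by
  have hS : (mpow A (1 / 2))ᴴ = mpow A (1 / 2) := (mpow_isHermitian hA _).eq
  have hT := posSemidef_mpow_mul_mul_mpow hA hB (-(1 / 2))
  obtain ⟨U, hU⟩ : ∃ U, U = (hT.1.eigenvectorUnitary : Matrix m m ℂ) := ⟨_, rfl⟩
  refine ⟨hT.1.eigenvalues,
    fun k => mpow A (1 / 2) * vecMulVec (fun i => U i k) (star fun i => U i k) * mpow A (1 / 2),
    hT.eigenvalues_nonneg, fun k => ?_, fun r => ?_⟩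
  · simpa only [hS] using
      (posSemidef_vecMulVec_self_star _).conjTranspose_mul_mul_same (mpow A (1 / 2))
  · rw [geoMean_eq_mpow, mpow_of_isHermitian hT.1, ← hU, mul_diagonal_mul_star_eq_sum_vecMulVec,
      Matrix.mul_sum, Matrix.sum_mul]
    simp only [Matrix.mul_smul, Matrix.smul_mul]

theorem geoMean_zero (hA : A.PosDef) (hB : B.IsHermitian) : geoMean 0 A B = A := by
  rw [geoMean_eq_mpow, mpow_zero (isHermitian_mpow_mul_mul_mpow hA.1 hB _), Matrix.mul_one,
    mpow_mul_mpow hA]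
  norm_num [mpow_one hA.1]

theorem geoMean_one (hA : A.PosDef) (hB : B.IsHermitian) : geoMean 1 A B = B := by
  rw [geoMean_eq_mpow, mpow_one (isHermitian_mpow_mul_mul_mpow hA.1 hB _)]
  simp only [← Matrix.mul_assoc, mpow_mul_mpow hA]
  simp only [Matrix.mul_assoc, mpow_mul_mpow hA]
  norm_num [mpow_zero hA.1]

theorem posSemidef_young_hadamard_geoMean (hA : A.PosDef) (hB : B.PosSemidef) (hC : C.PosDef)
    (hD : D.PosSemidef) {α : ℝ} (h0 : 0 ≤ α) (h1 : α ≤ 1) :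
    (α • (B ⊙ C) + (1 - α) • (A ⊙ D) - geoMean α A B ⊙ geoMean (1 - α) C D).PosSemidef := by
  obtain ⟨t, P, ht, hP, hAB⟩ := exists_geoMean_eq_sum_rpow_smul hA.1 hB
  obtain ⟨s, Q, hs, hQ, hCD⟩ := exists_geoMean_eq_sum_rpow_smul hC.1 hD
  have hA' : A = ∑ k, P k := by simpa using (geoMean_zero hA hB.1).symm.trans (hAB 0)
  have hB' : B = ∑ k, t k • P k := by simpa using (geoMean_one hA hB.1).symm.trans (hAB 1)
  have hC' : C = ∑ l, Q l := by simpa using (geoMean_zero hC hD.1).symm.trans (hCD 0)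
  have hD' : D = ∑ l, s l • Q l := by simpa using (geoMean_one hC hD.1).symm.trans (hCD 1)
  rw [hAB, hCD, hA', hB', hC', hD']
  exact posSemidef_young_hadamard_sum_rpow_smul ht hs hP hQ h0 h1

theorem posSemidef_hadamard_add_sub_geoMean_of_le (hA : A.PosDef) (hB : B.PosSemidef)
    (hC : C.PosDef) (hD : D.PosSemidef) (hAC : (C - A).PosSemidef) (hBD : (D - B).PosSemidef)
    {α : ℝ} (h0 : 0 ≤ α) (h1 : α ≤ 1) :
    (A ⊙ B + C ⊙ D - geoMean α A B ⊙ geoMean (1 - α) C D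
      - geoMean α C D ⊙ geoMean (1 - α) A B).PosSemidef := by
  have hsplit : A ⊙ B + C ⊙ D - geoMean α A B ⊙ geoMean (1 - α) C D
      - geoMean α C D ⊙ geoMean (1 - α) A B
      = (α • (B ⊙ C) + (1 - α) • (A ⊙ D) - geoMean α A B ⊙ geoMean (1 - α) C D)
        + (α • (D ⊙ A) + (1 - α) • (C ⊙ B) - geoMean α C D ⊙ geoMean (1 - α) A B)
        + (C - A) ⊙ (D - B) := by
    have hexpand : (C - A) ⊙ (D - B) = C ⊙ D - C ⊙ B - A ⊙ D + A ⊙ B := by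
      ext i j
      simp only [hadamard_apply, Matrix.sub_apply, Matrix.add_apply]
      ring
    rw [hexpand, hadamard_comm D A, hadamard_comm C B]
    module
  rw [hsplit]
  exact ((posSemidef_young_hadamard_geoMean hA hB hC hD h0 h1).add
    (posSemidef_young_hadamard_geoMean hC hD hA hB h0 h1)).add (hAC.hadamard hBD)

end MatrixPower

theorem chebyshev_hadamard_geoMean {n : ℕ} (A B : Fin n → Matrix (Fin n) (Fin n) ℂ)
    (hA : ∀ i, (A i).PosDef) (hB : ∀ i, (B i).PosDef)
    (hAmono : ∀ i j, i ≤ j → (A j - A i).PosSemidef)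
    (hBmono : ∀ i j, i ≤ j → (B j - B i).PosSemidef)
    (ω : Fin n → ℝ) (hω : ∀ i, 0 ≤ ω i) (α : ℝ) (hα : α ∈ Set.Icc (0 : ℝ) 1) :
    (((∑ i, ω i) • ∑ j, ω j • (A j).hadamard (B j)) -
      (∑ i, ω i • geoMean α (A i) (B i)).hadamard
        (∑ j, ω j • geoMean (1 - α) (A j) (B j))).PosSemidef :=
  posSemidef_chebyshev_hadamard hω fun i j hij =>
    posSemidef_hadamard_add_sub_geoMean_of_le (hA i) (hB i).posSemidef (hA j) (hB j).posSemidef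
      (hAmono i j hij) (hBmono i j hij) hα.1 hα.2
end
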